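/- Let ζ : Ω → ℝ be smooth on an open Ω ⊆ ℝ³ and let Φ : Ω → ℝ be smooth with ∂_u Φ nowhere zero, Φ_x + ζΦ_u = 0 and Φ_t + H̃[ζ]Φ_u = 0 on Ω. Suppose ũ = ũ(t,x,κ) is smooth with (t,x,ũ(t,x,κ)) ∈ Ω and Φ(t,x,ũ(t,x,κ)) = κ for all (t,x,κ) in its domain. Then ∂_x ũ = ζ(t,x,ũ), ∂_t ũ = H̃[ζ](t,x,ũ), ∂_κ ũ = 1/Φ_u(t,x,ũ) ≠ 0, and for each fixed κ the function (t,x) ↦ ũ(t,x,κ) solves the evolution equation u_t = H(t,x,u,∂_x u,…,∂_x^r u). -/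

import Mathlib

/-- Partial derivative in the first coordinate of a function of three real variables. -/
noncomputable def pdt (f : ℝ × ℝ × ℝ → ℝ) (p : ℝ × ℝ × ℝ) : ℝ :=
  deriv (fun s => f (s, p.2.1, p.2.2)) p.1

/-- Partial derivative in the second coordinate of a function of three real variables. -/
noncomputable def pdx (f : ℝ × ℝ × ℝ → ℝ) (p : ℝ × ℝ × ℝ) : ℝ :=
  deriv (fun s => f (p.1, s, p.2.2)) p.2.1

/-- Partial derivative in the third coordinate of a function of three real variables. -/
noncomputable def pdu (f : ℝ × ℝ × ℝ → ℝ) (p : ℝ × ℝ × ℝ) : ℝ :=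
  deriv (fun s => f (p.1, p.2.1, s)) p.2.2

/-- Iterates of the derivation `D = ∂ₓ + ζ∂ᵤ` applied to `ζ`. -/
noncomputable def Dit (ζ : ℝ × ℝ × ℝ → ℝ) : ℕ → ℝ × ℝ × ℝ → ℝ
  | 0 => ζ
  | j + 1 => fun p => pdx (Dit ζ j) p + ζ p * pdu (Dit ζ j) p

/-- `H̃[ζ](t,x,u) = H(t,x,u,ζ,(Dζ),…,(D^{r−1}ζ))(t,x,u)`. -/
noncomputable def Htil (r : ℕ) (H : ℝ → ℝ → (Fin (r + 1) → ℝ) → ℝ)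
    (ζ : ℝ × ℝ × ℝ → ℝ) (p : ℝ × ℝ × ℝ) : ℝ :=
  H p.1 p.2.1 (fun i => if i.val = 0 then p.2.2 else Dit ζ (i.val - 1) p)

open Filter Topology

section Aux
variable {f : ℝ × ℝ × ℝ → ℝ} {p : ℝ × ℝ × ℝ}

lemma hasDerivAt_slice_t (hf : DifferentiableAt ℝ f p) :
    HasDerivAt (fun s => f (s, p.2.1, p.2.2)) (fderiv ℝ f p (1, 0, 0)) p.1 := by
  have hc : HasDerivAt (fun s : ℝ => ((s, p.2.1, p.2.2) : ℝ × ℝ × ℝ)) ((1:ℝ), (0:ℝ), (0:ℝ)) p.1 :=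
    (hasDerivAt_id _).prodMk ((hasDerivAt_const _ _).prodMk (hasDerivAt_const _ _))
  exact hf.hasFDerivAt.comp_hasDerivAt _ hc

lemma hasDerivAt_slice_x (hf : DifferentiableAt ℝ f p) :
    HasDerivAt (fun s => f (p.1, s, p.2.2)) (fderiv ℝ f p (0, 1, 0)) p.2.1 := by
  have hc : HasDerivAt (fun s : ℝ => ((p.1, s, p.2.2) : ℝ × ℝ × ℝ)) ((0:ℝ), (1:ℝ), (0:ℝ)) p.2.1 :=
    (hasDerivAt_const _ _).prodMk ((hasDerivAt_id _).prodMk (hasDerivAt_const _ _))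
  exact hf.hasFDerivAt.comp_hasDerivAt _ hc

lemma hasDerivAt_slice_u (hf : DifferentiableAt ℝ f p) :
    HasDerivAt (fun s => f (p.1, p.2.1, s)) (fderiv ℝ f p (0, 0, 1)) p.2.2 := by
  have hc : HasDerivAt (fun s : ℝ => ((p.1, p.2.1, s) : ℝ × ℝ × ℝ)) ((0:ℝ), (0:ℝ), (1:ℝ)) p.2.2 :=
    (hasDerivAt_const _ _).prodMk ((hasDerivAt_const _ _).prodMk (hasDerivAt_id _))
  exact hf.hasFDerivAt.comp_hasDerivAt _ hc

lemma pdt_eq (hf : DifferentiableAt ℝ f p) : pdt f p = fderiv ℝ f p (1, 0, 0) :=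
  (hasDerivAt_slice_t hf).deriv

lemma pdx_eq (hf : DifferentiableAt ℝ f p) : pdx f p = fderiv ℝ f p (0, 1, 0) :=
  (hasDerivAt_slice_x hf).deriv

lemma pdu_eq (hf : DifferentiableAt ℝ f p) : pdu f p = fderiv ℝ f p (0, 0, 1) :=
  (hasDerivAt_slice_u hf).deriv

lemma fderiv_apply3 (hf : DifferentiableAt ℝ f p) (a b c : ℝ) :
    fderiv ℝ f p (a, b, c) = a * pdt f p + b * pdx f p + c * pdu f p := by
  have h : ((a, b, c) : ℝ × ℝ × ℝ)
      = a • ((1:ℝ), (0:ℝ), (0:ℝ)) + b • ((0:ℝ), (1:ℝ), (0:ℝ)) + c • ((0:ℝ), (0:ℝ), (1:ℝ)) := by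
    simp [Prod.ext_iff]
  rw [h, map_add, map_add, map_smul, map_smul, map_smul,
    pdt_eq hf, pdx_eq hf, pdu_eq hf, smul_eq_mul, smul_eq_mul, smul_eq_mul]

lemma hasDerivAt_comp_x (a x : ℝ) {g : ℝ → ℝ} {g' : ℝ}
    (hf : DifferentiableAt ℝ f (a, x, g x)) (hg : HasDerivAt g g' x) :
    HasDerivAt (fun s => f (a, s, g s))
      (pdx f (a, x, g x) + g' * pdu f (a, x, g x)) x := by
  have hc : HasDerivAt (fun s : ℝ => ((a, s, g s) : ℝ × ℝ × ℝ)) ((0:ℝ), (1:ℝ), g') x :=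
    (hasDerivAt_const _ _).prodMk ((hasDerivAt_id _).prodMk hg)
  have h := hf.hasFDerivAt.comp_hasDerivAt x hc
  have hv : fderiv ℝ f (a, x, g x) (0, 1, g')
      = pdx f (a, x, g x) + g' * pdu f (a, x, g x) := by
    rw [fderiv_apply3 hf]; ring
  rw [hv] at h; exact h

lemma hasDerivAt_comp_t (b : ℝ) {g : ℝ → ℝ} {g' : ℝ} {t : ℝ}
    (hf : DifferentiableAt ℝ f (t, b, g t)) (hg : HasDerivAt g g' t) :
    HasDerivAt (fun s => f (s, b, g s))
      (pdt f (t, b, g t) + g' * pdu f (t, b, g t)) t := by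
  have hc : HasDerivAt (fun s : ℝ => ((s, b, g s) : ℝ × ℝ × ℝ)) ((1:ℝ), (0:ℝ), g') t :=
    (hasDerivAt_id _).prodMk ((hasDerivAt_const _ _).prodMk hg)
  have h := hf.hasFDerivAt.comp_hasDerivAt t hc
  have hv : fderiv ℝ f (t, b, g t) (1, 0, g')
      = pdt f (t, b, g t) + g' * pdu f (t, b, g t) := by
    rw [fderiv_apply3 hf]; ring
  rw [hv] at h; exact h

lemma hasDerivAt_comp_u (a b : ℝ) {g : ℝ → ℝ} {g' : ℝ} {κ : ℝ}
    (hf : DifferentiableAt ℝ f (a, b, g κ)) (hg : HasDerivAt g g' κ) :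
    HasDerivAt (fun s => f (a, b, g s)) (g' * pdu f (a, b, g κ)) κ := by
  have hc : HasDerivAt (fun s : ℝ => ((a, b, g s) : ℝ × ℝ × ℝ)) ((0:ℝ), (0:ℝ), g') κ :=
    (hasDerivAt_const _ _).prodMk ((hasDerivAt_const _ _).prodMk hg)
  have h := hf.hasFDerivAt.comp_hasDerivAt κ hc
  have hv : fderiv ℝ f (a, b, g κ) (0, 0, g') = g' * pdu f (a, b, g κ) := by
    rw [fderiv_apply3 hf]; ring
  rw [hv] at h; exact h

lemma pdx_contDiffOn {Ω : Set (ℝ × ℝ × ℝ)} (hΩ : IsOpen Ω)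
    (hf : ContDiffOn ℝ (⊤ : ℕ∞) f Ω) : ContDiffOn ℝ (⊤ : ℕ∞) (pdx f) Ω := by
  have h1 : ContDiffOn ℝ (⊤ : ℕ∞) (fun q => fderiv ℝ f q) Ω :=
    hf.fderiv_of_isOpen hΩ (by simp)
  have h2 : ContDiffOn ℝ (⊤ : ℕ∞) (fun q => fderiv ℝ f q (0, 1, 0)) Ω :=
    h1.clm_apply contDiffOn_const
  refine h2.congr fun q hq => ?_
  exact pdx_eq ((hf.contDiffAt (hΩ.mem_nhds hq)).differentiableAt (by simp))

lemma pdu_contDiffOn {Ω : Set (ℝ × ℝ × ℝ)} (hΩ : IsOpen Ω)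
    (hf : ContDiffOn ℝ (⊤ : ℕ∞) f Ω) : ContDiffOn ℝ (⊤ : ℕ∞) (pdu f) Ω := by
  have h1 : ContDiffOn ℝ (⊤ : ℕ∞) (fun q => fderiv ℝ f q) Ω :=
    hf.fderiv_of_isOpen hΩ (by simp)
  have h2 : ContDiffOn ℝ (⊤ : ℕ∞) (fun q => fderiv ℝ f q (0, 0, 1)) Ω :=
    h1.clm_apply contDiffOn_const
  refine h2.congr fun q hq => ?_
  exact pdu_eq ((hf.contDiffAt (hΩ.mem_nhds hq)).differentiableAt (by simp))

end Aux

/-- Corollary 6: the composition of the nonlocal substitution `ζ = −Φₓ/Φᵤ` with the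
hodograph transformation `κ = Φ` reduces the determining equation DE₀ to the
original evolution equation: if `Φₓ + ζΦᵤ = 0`, `Φ_t + H̃[ζ]Φᵤ = 0` and
`Φ(t,x,ũ(t,x,κ)) = κ`, then `ũₓ = ζ(t,x,ũ)`, `ũ_t = H̃[ζ](t,x,ũ)`,
`ũ_κ = 1/Φᵤ(t,x,ũ) ≠ 0`, and each `ũ(·,·,κ)` solves the evolution equation. -/
theorem hodograph_reduces_DE0
    (r : ℕ) (hr : 1 ≤ r) (H : ℝ → ℝ → (Fin (r + 1) → ℝ) → ℝ)
    (hH : ContDiff ℝ (⊤ : ℕ∞) fun q : ℝ × ℝ × (Fin (r + 1) → ℝ) => H q.1 q.2.1 q.2.2)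
    (Ω : Set (ℝ × ℝ × ℝ)) (hΩ : IsOpen Ω)
    (ζ : ℝ × ℝ × ℝ → ℝ) (hζ : ContDiffOn ℝ (⊤ : ℕ∞) ζ Ω)
    (Φ : ℝ × ℝ × ℝ → ℝ) (hΦ : ContDiffOn ℝ (⊤ : ℕ∞) Φ Ω)
    (hΦu : ∀ p ∈ Ω, pdu Φ p ≠ 0)
    (hΦx : ∀ p ∈ Ω, pdx Φ p + ζ p * pdu Φ p = 0)
    (hΦt : ∀ p ∈ Ω, pdt Φ p + Htil r H ζ p * pdu Φ p = 0)
    (S : Set (ℝ × ℝ × ℝ)) (hS : IsOpen S)  -- the domain of `ũ (t, x, κ)`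
    (ut : ℝ × ℝ × ℝ → ℝ) (hut : ContDiffOn ℝ (⊤ : ℕ∞) ut S)
    (hmem : ∀ p ∈ S, (p.1, p.2.1, ut p) ∈ Ω)
    (hΦeq : ∀ p ∈ S, Φ (p.1, p.2.1, ut p) = p.2.2) :
    (∀ p ∈ S, pdx ut p = ζ (p.1, p.2.1, ut p)) ∧
    (∀ p ∈ S, pdt ut p = Htil r H ζ (p.1, p.2.1, ut p)) ∧
    (∀ p ∈ S, pdu ut p = 1 / pdu Φ (p.1, p.2.1, ut p) ∧ pdu ut p ≠ 0) ∧
    (∀ p ∈ S, deriv (fun s => ut (s, p.2.1, p.2.2)) p.1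
        = H p.1 p.2.1 (fun i => iteratedDeriv i.val (fun s => ut (p.1, s, p.2.2)) p.2.1)) := by
  have hutD : ∀ p ∈ S, DifferentiableAt ℝ ut p := fun p hp =>
    (hut.contDiffAt (hS.mem_nhds hp)).differentiableAt (by simp)
  have hΦD : ∀ q ∈ Ω, DifferentiableAt ℝ Φ q := fun q hq =>
    (hΦ.contDiffAt (hΩ.mem_nhds hq)).differentiableAt (by simp)
  -- slice derivatives of ut
  have hgx : ∀ p ∈ S, HasDerivAt (fun s => ut (p.1, s, p.2.2)) (pdx ut p) p.2.1 := by
    intro p hp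
    have hc : DifferentiableAt ℝ (fun s : ℝ => ((p.1, s, p.2.2) : ℝ × ℝ × ℝ)) p.2.1 :=
      (differentiableAt_const _).prodMk (differentiableAt_id.prodMk (differentiableAt_const _))
    have hd : DifferentiableAt ℝ (fun s => ut (p.1, s, p.2.2)) p.2.1 :=
      DifferentiableAt.comp p.2.1 (hutD p hp) hc
    exact hd.hasDerivAt
  have hgt : ∀ p ∈ S, HasDerivAt (fun s => ut (s, p.2.1, p.2.2)) (pdt ut p) p.1 := by
    intro p hp
    have hc : DifferentiableAt ℝ (fun s : ℝ => ((s, p.2.1, p.2.2) : ℝ × ℝ × ℝ)) p.1 :=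
      differentiableAt_id.prodMk ((differentiableAt_const _).prodMk (differentiableAt_const _))
    have hd : DifferentiableAt ℝ (fun s => ut (s, p.2.1, p.2.2)) p.1 :=
      DifferentiableAt.comp p.1 (hutD p hp) hc
    exact hd.hasDerivAt
  have hgu : ∀ p ∈ S, HasDerivAt (fun s => ut (p.1, p.2.1, s)) (pdu ut p) p.2.2 := by
    intro p hp
    have hc : DifferentiableAt ℝ (fun s : ℝ => ((p.1, p.2.1, s) : ℝ × ℝ × ℝ)) p.2.2 :=
      (differentiableAt_const _).prodMk ((differentiableAt_const _).prodMk differentiableAt_id)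
    have hd : DifferentiableAt ℝ (fun s => ut (p.1, p.2.1, s)) p.2.2 :=
      DifferentiableAt.comp p.2.2 (hutD p hp) hc
    exact hd.hasDerivAt
  -- Part 1 : ũₓ = ζ
  have part1 : ∀ p ∈ S, pdx ut p = ζ (p.1, p.2.1, ut p) := by
    intro p hp
    have hq : (p.1, p.2.1, ut p) ∈ Ω := hmem p hp
    have hd : HasDerivAt (fun s => Φ (p.1, s, ut (p.1, s, p.2.2)))
        (pdx Φ (p.1, p.2.1, ut p) + pdx ut p * pdu Φ (p.1, p.2.1, ut p)) p.2.1 :=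
      hasDerivAt_comp_x (g := fun s => ut (p.1, s, p.2.2)) p.1 p.2.1 (hΦD _ hq) (hgx p hp)
    have hev : (fun s => Φ (p.1, s, ut (p.1, s, p.2.2))) =ᶠ[𝓝 p.2.1] fun _ => p.2.2 := by
      have hcont : Continuous (fun s : ℝ => ((p.1, s, p.2.2) : ℝ × ℝ × ℝ)) := by fun_prop
      have hU : ∀ᶠ s in 𝓝 p.2.1, ((p.1, s, p.2.2) : ℝ × ℝ × ℝ) ∈ S :=
        (hS.preimage hcont).mem_nhds hp
      filter_upwards [hU] with s hs
      exact hΦeq _ hs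
    have h0 : pdx Φ (p.1, p.2.1, ut p) + pdx ut p * pdu Φ (p.1, p.2.1, ut p) = 0 := by
      have h := hd.deriv
      rw [hev.deriv_eq] at h
      simpa using h.symm
    have hx := hΦx _ hq
    have hne := hΦu _ hq
    have hz : (pdx ut p - ζ (p.1, p.2.1, ut p)) * pdu Φ (p.1, p.2.1, ut p) = 0 := by
      linear_combination h0 - hx
    rcases mul_eq_zero.mp hz with h | h
    · linarith
    · exact absurd h hne
  -- Part 2 : ũ_t = H̃[ζ]
  have part2 : ∀ p ∈ S, pdt ut p = Htil r H ζ (p.1, p.2.1, ut p) := by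
    intro p hp
    have hq : (p.1, p.2.1, ut p) ∈ Ω := hmem p hp
    have hd : HasDerivAt (fun s => Φ (s, p.2.1, ut (s, p.2.1, p.2.2)))
        (pdt Φ (p.1, p.2.1, ut p) + pdt ut p * pdu Φ (p.1, p.2.1, ut p)) p.1 :=
      hasDerivAt_comp_t (g := fun s => ut (s, p.2.1, p.2.2)) p.2.1 (hΦD _ hq) (hgt p hp)
    have hev : (fun s => Φ (s, p.2.1, ut (s, p.2.1, p.2.2))) =ᶠ[𝓝 p.1] fun _ => p.2.2 := by
      have hcont : Continuous (fun s : ℝ => ((s, p.2.1, p.2.2) : ℝ × ℝ × ℝ)) := by fun_prop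
      have hU : ∀ᶠ s in 𝓝 p.1, ((s, p.2.1, p.2.2) : ℝ × ℝ × ℝ) ∈ S :=
        (hS.preimage hcont).mem_nhds hp
      filter_upwards [hU] with s hs
      exact hΦeq _ hs
    have h0 : pdt Φ (p.1, p.2.1, ut p) + pdt ut p * pdu Φ (p.1, p.2.1, ut p) = 0 := by
      have h := hd.deriv
      rw [hev.deriv_eq] at h
      simpa using h.symm
    have hx := hΦt _ hq
    have hne := hΦu _ hq
    have hz : (pdt ut p - Htil r H ζ (p.1, p.2.1, ut p)) * pdu Φ (p.1, p.2.1, ut p) = 0 := by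
      linear_combination h0 - hx
    rcases mul_eq_zero.mp hz with h | h
    · linarith
    · exact absurd h hne
  -- Part 3 : ũ_κ = 1/Φᵤ ≠ 0
  have part3 : ∀ p ∈ S, pdu ut p = 1 / pdu Φ (p.1, p.2.1, ut p) ∧ pdu ut p ≠ 0 := by
    intro p hp
    have hq : (p.1, p.2.1, ut p) ∈ Ω := hmem p hp
    have hd : HasDerivAt (fun s => Φ (p.1, p.2.1, ut (p.1, p.2.1, s)))
        (pdu ut p * pdu Φ (p.1, p.2.1, ut p)) p.2.2 :=
      hasDerivAt_comp_u (g := fun s => ut (p.1, p.2.1, s)) p.1 p.2.1 (hΦD _ hq) (hgu p hp)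
    have hev : (fun s => Φ (p.1, p.2.1, ut (p.1, p.2.1, s))) =ᶠ[𝓝 p.2.2] fun s => s := by
      have hcont : Continuous (fun s : ℝ => ((p.1, p.2.1, s) : ℝ × ℝ × ℝ)) := by fun_prop
      have hU : ∀ᶠ s in 𝓝 p.2.2, ((p.1, p.2.1, s) : ℝ × ℝ × ℝ) ∈ S :=
        (hS.preimage hcont).mem_nhds hp
      filter_upwards [hU] with s hs
      exact hΦeq _ hs
    have h1 : pdu ut p * pdu Φ (p.1, p.2.1, ut p) = 1 := by
      have h := hd.deriv
      rw [hev.deriv_eq] at h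
      simpa using h.symm
    have hne := hΦu _ hq
    refine ⟨(eq_div_iff hne).mpr h1, left_ne_zero_of_mul_eq_one h1⟩
  -- smoothness of the iterates Dⁱζ
  have hDit : ∀ j, ContDiffOn ℝ (⊤ : ℕ∞) (Dit ζ j) Ω := by
    intro j
    induction j with
    | zero => exact hζ
    | succ j ih =>
      show ContDiffOn ℝ (⊤ : ℕ∞) (fun p => pdx (Dit ζ j) p + ζ p * pdu (Dit ζ j) p) Ω
      exact (pdx_contDiffOn hΩ ih).add (hζ.mul (pdu_contDiffOn hΩ ih))
  -- iterated x-derivatives of ũ are the iterates Dʲζ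
  have hiter : ∀ j, ∀ p ∈ S, iteratedDeriv (j + 1) (fun s => ut (p.1, s, p.2.2)) p.2.1
      = Dit ζ j (p.1, p.2.1, ut p) := by
    intro j
    induction j with
    | zero =>
      intro p hp
      rw [iteratedDeriv_one, (hgx p hp).deriv, part1 p hp]
      rfl
    | succ j ih =>
      intro p hp
      have hq : (p.1, p.2.1, ut p) ∈ Ω := hmem p hp
      rw [iteratedDeriv_succ]
      have hev : iteratedDeriv (j + 1) (fun s => ut (p.1, s, p.2.2))
          =ᶠ[𝓝 p.2.1] fun s => Dit ζ j (p.1, s, ut (p.1, s, p.2.2)) := by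
        have hcont : Continuous (fun s : ℝ => ((p.1, s, p.2.2) : ℝ × ℝ × ℝ)) := by fun_prop
        have hU : ∀ᶠ s in 𝓝 p.2.1, ((p.1, s, p.2.2) : ℝ × ℝ × ℝ) ∈ S :=
          (hS.preimage hcont).mem_nhds hp
        filter_upwards [hU] with s hs
        exact ih (p.1, s, p.2.2) hs
      rw [hev.deriv_eq]
      have hDd : DifferentiableAt ℝ (Dit ζ j) (p.1, p.2.1, ut p) :=
        ((hDit j).contDiffAt (hΩ.mem_nhds hq)).differentiableAt (by simp)
      have hD : HasDerivAt (fun s => Dit ζ j (p.1, s, ut (p.1, s, p.2.2)))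
          (pdx (Dit ζ j) (p.1, p.2.1, ut p) + pdx ut p * pdu (Dit ζ j) (p.1, p.2.1, ut p))
          p.2.1 :=
        hasDerivAt_comp_x (g := fun s => ut (p.1, s, p.2.2)) p.1 p.2.1 hDd (hgx p hp)
      rw [hD.deriv, part1 p hp]
      rfl
  refine ⟨part1, part2, part3, ?_⟩
  intro p hp
  have h1 : deriv (fun s => ut (s, p.2.1, p.2.2)) p.1 = pdt ut p := rfl
  rw [h1, part2 p hp]
  show H p.1 p.2.1 (fun i => if i.val = 0 then ut p else Dit ζ (i.val - 1) (p.1, p.2.1, ut p))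
      = H p.1 p.2.1 (fun i => iteratedDeriv i.val (fun s => ut (p.1, s, p.2.2)) p.2.1)
  congr 1
  funext i
  rcases i with ⟨iv, hi⟩
  cases iv with
  | zero => simp [iteratedDeriv_zero]
  | succ k =>
    simp only [Nat.succ_ne_zero, if_false, Nat.succ_sub_one]
    exact (hiter k p hp).symm
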